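/- arXiv:1411.5044 — 4 statements merged into one kernel-verified Lean document; each statement's English description precedes it below -/
import Mathlib

section
/- Consider one-dimensional Euler states U_j = (ρ_j, ρ_j u_j, E_j) ∈ ℝ³ for j ∈ {e−1, e, e+1} with densities ρ_j > 0. Let the Euler flux be F(U) = (ρu, ρu² + p, u(E + p)) with any pressure values (the claim concerns only the density component, whose flux is ρu), and let F̂_λ(U_L, U_R, n) = (n/2)(F(U_L) + F(U_R)) − (λ/2)(U_R − U_L) be the local Lax–Friedrichs flux. If λ > 0 satisfies λ ≥ |u_j| for all j ∈ {e−1, e, e+1}, and Δt > 0, h > 0 satisfy the CFL condition Δt λ / h ≤ 1/2, then the density component of the three-point update U_e^{Δt} = U_e − (Δt/h)(F̂_λ(U_e, U_{e−1}, −1) + F̂_λ(U_e, U_{e+1}, +1)) equals ρ_e(1 − Δt λ/h) + (Δt/(2h))(ρ_{e−1}(λ + u_{e−1}) + ρ_{e+1}(λ − u_{e+1})) and is strictly positive. -/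
/-- The one-dimensional local Lax–Friedrichs numerical flux with dissipation
coefficient `lam`:  `F̂(U_L, U_R, n) = (n/2)(F U_L + F U_R) − (lam/2)(U_R − U_L)`. -/
noncomputable def llfFlux {m : ℕ} (F : (Fin m → ℝ) → (Fin m → ℝ)) (lam : ℝ)
    (UL UR : Fin m → ℝ) (n : ℝ) : Fin m → ℝ :=
  (n / 2) • (F UL + F UR) - (lam / 2) • (UR - UL)

/-! The flux `F(U_e)` of the central state enters the two interface fluxes with opposite normals
and cancels, so the updated density is `ρ_e (1 - Δt λ / h)` plus the neighbour densities weighted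
by `λ ± u_{e∓1} ≥ 0`. The CFL condition keeps the central weight positive. -/

theorem llfFlux_apply {m : ℕ} (F : (Fin m → ℝ) → (Fin m → ℝ)) (lam : ℝ) (UL UR : Fin m → ℝ)
    (n : ℝ) (i : Fin m) :
    llfFlux F lam UL UR n i = n / 2 * (F UL i + F UR i) - lam / 2 * (UR i - UL i) := by
  simp only [llfFlux, Pi.sub_apply, Pi.smul_apply, Pi.add_apply, smul_eq_mul]

theorem llf_three_point_update_apply {m : ℕ} (F : (Fin m → ℝ) → (Fin m → ℝ)) (lam c : ℝ)
    (U Um Up : Fin m → ℝ) (i : Fin m) :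
    (U - c • (llfFlux F lam U Um (-1) + llfFlux F lam U Up 1)) i =
      U i * (1 - c * lam) + c / 2 * ((lam * Um i + F Um i) + (lam * Up i - F Up i)) := by
  simp only [Pi.sub_apply, Pi.smul_apply, Pi.add_apply, smul_eq_mul, llfFlux_apply]
  ring

theorem three_point_density_pos {ρm ρ ρp um up lam c : ℝ}
    (hρm : 0 ≤ ρm) (hρ : 0 < ρ) (hρp : 0 ≤ ρp) (hum : |um| ≤ lam) (hup : |up| ≤ lam)
    (hc : 0 ≤ c) (hCFL : c * lam < 1) :
    0 < ρ * (1 - c * lam) + c / 2 * (ρm * (lam + um) + ρp * (lam - up)) := by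
  have hm : 0 ≤ ρm * (lam + um) := mul_nonneg hρm (by linarith [neg_abs_le um])
  have hp : 0 ≤ ρp * (lam - up) := mul_nonneg hρp (by linarith [le_abs_self up])
  have hcenter : 0 < ρ * (1 - c * lam) := mul_pos hρ (by linarith)
  have hneighbours := mul_nonneg (div_nonneg hc zero_le_two) (add_nonneg hm hp)
  linarith

theorem density_positivity_three_point_general
    (ρem ρe ρep uem ue uep Eem Ee Eep lam Δt h : ℝ)
    (hρem : 0 < ρem) (hρe : 0 < ρe) (hρep : 0 < ρep)
    (F : (Fin 3 → ℝ) → (Fin 3 → ℝ))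
    (Uem Ue Uep : Fin 3 → ℝ)
    (hUem : Uem = ![ρem, ρem * uem, Eem])
    (hUe : Ue = ![ρe, ρe * ue, Ee])
    (hUep : Uep = ![ρep, ρep * uep, Eep])
    (hFem : F Uem 0 = ρem * uem)
    (hFep : F Uep 0 = ρep * uep)
    (hlem : |uem| ≤ lam) (hlep : |uep| ≤ lam)
    (hΔt : 0 < Δt) (hh : 0 < h) (hCFL : Δt * lam / h ≤ 1 / 2) :
    (Ue - (Δt / h) • (llfFlux F lam Ue Uem (-1) + llfFlux F lam Ue Uep 1)) 0 =
        ρe * (1 - Δt * lam / h) +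
          (Δt / (2 * h)) * (ρem * (lam + uem) + ρep * (lam - uep)) ∧
      0 < (Ue - (Δt / h) • (llfFlux F lam Ue Uem (-1) + llfFlux F lam Ue Uep 1)) 0 := by
  have hcoef : Δt * lam / h = Δt / h * lam ∧ Δt / (2 * h) = Δt / h / 2 :=
    ⟨by ring, by ring⟩
  have hupdate : (Ue - (Δt / h) • (llfFlux F lam Ue Uem (-1) + llfFlux F lam Ue Uep 1)) 0 =
      ρe * (1 - Δt * lam / h) +
        (Δt / (2 * h)) * (ρem * (lam + uem) + ρep * (lam - uep)) := by
    rw [llf_three_point_update_apply, hFem, hFep, hUe, hUem, hUep]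
    simp only [Matrix.cons_val_zero]
    rw [hcoef.1, hcoef.2]
    ring
  refine ⟨hupdate, hupdate ▸ ?_⟩
  rw [hcoef.1, hcoef.2]
  exact three_point_density_pos hρem.le hρe hρep.le hlem hlep (by positivity)
    (by linarith [hcoef.1])

/-- for one-dimensional Euler states `U_j = (ρ_j, ρ_j u_j, E_j)`
with positive densities, a flux `F` whose density component is `ρ u`, a
dissipation coefficient `λ ≥ |u_j|` for all three states, and the CFL condition
`Δt λ / h ≤ 1/2`, the density component of the three-point update equals
`ρ_e(1 − Δtλ/h) + (Δt/(2h))(ρ_{e−1}(λ + u_{e−1}) + ρ_{e+1}(λ − u_{e+1}))`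
and is strictly positive. -/
theorem density_positivity_three_point
    (ρem ρe ρep uem ue uep Eem Ee Eep lam Δt h : ℝ)
    (hρem : 0 < ρem) (hρe : 0 < ρe) (hρep : 0 < ρep)
    (F : (Fin 3 → ℝ) → (Fin 3 → ℝ))
    (Uem Ue Uep : Fin 3 → ℝ)
    (hUem : Uem = ![ρem, ρem * uem, Eem])
    (hUe : Ue = ![ρe, ρe * ue, Ee])
    (hUep : Uep = ![ρep, ρep * uep, Eep])
    (hFem : F Uem 0 = ρem * uem)
    (hFe : F Ue 0 = ρe * ue)
    (hFep : F Uep 0 = ρep * uep)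
    (hlam : 0 < lam)
    (hlem : |uem| ≤ lam) (hle : |ue| ≤ lam) (hlep : |uep| ≤ lam)
    (hΔt : 0 < Δt) (hh : 0 < h) (hCFL : Δt * lam / h ≤ 1 / 2) :
    (Ue - (Δt / h) • (llfFlux F lam Ue Uem (-1) + llfFlux F lam Ue Uep 1)) 0 =
        ρe * (1 - Δt * lam / h) +
          (Δt / (2 * h)) * (ρem * (lam + uem) + ρep * (lam - uep)) ∧
      0 < (Ue - (Δt / h) • (llfFlux F lam Ue Uem (-1) + llfFlux F lam Ue Uep 1)) 0 :=
  density_positivity_three_point_general ρem ρe ρep uem ue uep Eem Ee Eep lam Δt h hρem hρe hρep F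
    Uem Ue Uep hUem hUe hUep hFem hFep hlem hlep hΔt hh hCFL
end

section
/- Consider one-dimensional Euler states U_e = (ρ_e, ρ_e u_e, E_e) and U_{e+1} = (ρ_{e+1}, ρ_{e+1} u_{e+1}, E_{e+1}) with ρ_e > 0 and ρ_{e+1} > 0, and let the density component of the Euler flux F(U) be ρu. Let λ > 0, Δt > 0, h > 0 with Δt λ / h ≤ 1/2, λ > |u_e|, and λ > |u_{e+1}|. Then the density component of the half-system update U_{p1} = U_e − (Δt/h)(F(U_{e+1}) − λ U_{e+1} − F(U_e) + λ U_e) satisfies the convex-combination identity ρ(U_{p1}) = ρ_e[1 − (Δt/h)(λ − u_e)] + ρ_{e+1}(Δt/h)(λ − u_{e+1}), both coefficients 1 − (Δt/h)(λ − u_e) and (Δt/h)(λ − u_{e+1}) are strictly positive, ρ(U_{p1}) > 0, and the normalized weights ρ_e[1 − (Δt/h)(λ − u_e)]/ρ(U_{p1}) and ρ_{e+1}(Δt/h)(λ − u_{e+1})/ρ(U_{p1}) are positive and sum to one. -/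
theorem sub_smul_flux_difference_apply {ι : Type*} (U V FU FV : ι → ℝ) (i : ι)
    (ν lam u v : ℝ) (hFU : FU i = U i * u) (hFV : FV i = V i * v) :
    (U - ν • (FV - lam • V - FU + lam • U)) i =
      U i * (1 - ν * (lam - u)) + V i * (ν * (lam - v)) := by
  simp only [Pi.sub_apply, Pi.add_apply, Pi.smul_apply, smul_eq_mul, hFU, hFV]
  ring

theorem one_sub_mul_sub_pos_of_cfl {ν lam u : ℝ} (hν : 0 < ν) (hCFL : ν * lam ≤ 1 / 2)
    (hu : -lam < u) : 0 < 1 - ν * (lam - u) := by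
  have : ν * (lam - u) < ν * (2 * lam) := mul_lt_mul_of_pos_left (by linarith) hν
  linarith

theorem half_update_density_convex_combination_general
    (ρe ρep ue uep Ee Eep lam Δt h : ℝ)
    (hρe : 0 < ρe) (hρep : 0 < ρep)
    (F : (Fin 3 → ℝ) → (Fin 3 → ℝ))
    (Ue Uep : Fin 3 → ℝ)
    (hUe : Ue = ![ρe, ρe * ue, Ee])
    (hUep : Uep = ![ρep, ρep * uep, Eep])
    (hFe : F Ue 0 = ρe * ue)
    (hFep : F Uep 0 = ρep * uep)
    (hΔt : 0 < Δt) (hh : 0 < h)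
    (hCFL : Δt * lam / h ≤ 1 / 2)
    (hle : |ue| < lam) (hlep : |uep| < lam)
    (Up1 : Fin 3 → ℝ)
    (hUp1 : Up1 = Ue - (Δt / h) • (F Uep - lam • Uep - F Ue + lam • Ue)) :
    Up1 0 = ρe * (1 - (Δt / h) * (lam - ue)) + ρep * ((Δt / h) * (lam - uep)) ∧
    0 < 1 - (Δt / h) * (lam - ue) ∧
    0 < (Δt / h) * (lam - uep) ∧
    0 < Up1 0 ∧
    0 < ρe * (1 - (Δt / h) * (lam - ue)) / Up1 0 ∧
    0 < ρep * ((Δt / h) * (lam - uep)) / Up1 0 ∧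
    ρe * (1 - (Δt / h) * (lam - ue)) / Up1 0 +
      ρep * ((Δt / h) * (lam - uep)) / Up1 0 = 1 := by
  have hν : 0 < Δt / h := div_pos hΔt hh
  have hρUe : Ue 0 = ρe := by simp [hUe]
  have hρUep : Uep 0 = ρep := by simp [hUep]
  have hUp1_density : Up1 0 =
      ρe * (1 - (Δt / h) * (lam - ue)) + ρep * ((Δt / h) * (lam - uep)) := by
    rw [hUp1, sub_smul_flux_difference_apply Ue Uep (F Ue) (F Uep) 0 _ lam ue uep
      (by rw [hFe, hρUe]) (by rw [hFep, hρUep]), hρUe, hρUep]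
  have hc1 : 0 < 1 - (Δt / h) * (lam - ue) :=
    one_sub_mul_sub_pos_of_cfl hν (by rwa [div_mul_eq_mul_div]) (abs_lt.mp hle).1
  have hc2 : 0 < (Δt / h) * (lam - uep) := mul_pos hν (sub_pos.mpr (lt_of_abs_lt hlep))
  have hpos : 0 < Up1 0 := by rw [hUp1_density]; positivity
  refine ⟨hUp1_density, hc1, hc2, hpos, by positivity, by positivity, ?_⟩
  rw [← add_div, ← hUp1_density, div_self hpos.ne']

/-- the density component of the half-system update
`U_{p1} = U_e − (Δt/h)(F U_{e+1} − λ U_{e+1} − F U_e + λ U_e)` is a convex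
combination `ρ_e[1 − (Δt/h)(λ − u_e)] + ρ_{e+1}(Δt/h)(λ − u_{e+1})` with
strictly positive coefficients; it is strictly positive, and the normalized
weights are positive and sum to one. -/
theorem half_update_density_convex_combination
    (ρe ρep ue uep Ee Eep lam Δt h : ℝ)
    (hρe : 0 < ρe) (hρep : 0 < ρep)
    (F : (Fin 3 → ℝ) → (Fin 3 → ℝ))
    (Ue Uep : Fin 3 → ℝ)
    (hUe : Ue = ![ρe, ρe * ue, Ee])
    (hUep : Uep = ![ρep, ρep * uep, Eep])
    (hFe : F Ue 0 = ρe * ue)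
    (hFep : F Uep 0 = ρep * uep)
    (hlam : 0 < lam) (hΔt : 0 < Δt) (hh : 0 < h)
    (hCFL : Δt * lam / h ≤ 1 / 2)
    (hle : |ue| < lam) (hlep : |uep| < lam)
    (Up1 : Fin 3 → ℝ)
    (hUp1 : Up1 = Ue - (Δt / h) • (F Uep - lam • Uep - F Ue + lam • Ue)) :
    Up1 0 = ρe * (1 - (Δt / h) * (lam - ue)) + ρep * ((Δt / h) * (lam - uep)) ∧
    0 < 1 - (Δt / h) * (lam - ue) ∧
    0 < (Δt / h) * (lam - uep) ∧
    0 < Up1 0 ∧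
    0 < ρe * (1 - (Δt / h) * (lam - ue)) / Up1 0 ∧
    0 < ρep * ((Δt / h) * (lam - uep)) / Up1 0 ∧
    ρe * (1 - (Δt / h) * (lam - ue)) / Up1 0 +
      ρep * ((Δt / h) * (lam - uep)) / Up1 0 = 1 :=
  half_update_density_convex_combination_general ρe ρep ue uep Ee Eep lam Δt h hρe hρep F Ue Uep hUe
    hUep hFe hFep hΔt hh hCFL hle hlep Up1 hUp1
end

section
/- Let γ ≥ 1, d ≥ 1, and let (α_k)_{k=1}^K be nonnegative reals with Σ_k α_k = 1. Let u_k ∈ ℝ^d and c_k ≥ 0 for each k, and set u = Σ_k α_k u_k. Then Σ_k α_k |u_k|² − |u|² ≥ 0, and defining c = √( Σ_k α_k c_k² + (γ(γ−1)/2)(Σ_k α_k |u_k|² − |u|²) ), the combined maximum characteristic speed satisfies |u| + c ≤ √(2 + γ(γ−1)) · max_k (|u_k| + c_k), where |·| denotes the Euclidean norm on ℝ^d. -/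
/-!
Write `β = γ(γ-1)/2 ≥ 0`. By Jensen's inequality for the convex function `‖·‖²`, the averaged
kinetic term `Σ α_k |u_k|² - |u|²` is nonnegative, and `|u|² + c² = (1-β)|u|² + β Σ α_k |u_k|² + Σ α_k c_k²`
is at most `(1+β) Σ α_k (|u_k|² + c_k²) ≤ (1+β) max_k (|u_k| + c_k)²`. The bound follows from
`(|u| + c)² ≤ 2(|u|² + c²)`.
-/

open Finset

theorem sq_norm_sum_smul_le {ι E : Type*} [SeminormedAddCommGroup E] [NormedSpace ℝ E]
    {t : Finset ι} {w : ι → ℝ} (h₀ : ∀ i ∈ t, 0 ≤ w i) (h₁ : ∑ i ∈ t, w i = 1) (p : ι → E) :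
    ‖∑ i ∈ t, w i • p i‖ ^ 2 ≤ ∑ i ∈ t, w i * ‖p i‖ ^ 2 :=
  ((convexOn_norm convex_univ).pow (fun x _ => norm_nonneg x) 2).map_sum_le h₀ h₁
    (fun _ _ => Set.mem_univ _)

theorem sum_mul_sq_add_sum_mul_sq_le {ι : Type*} {t : Finset ι} {w f g : ι → ℝ} {M : ℝ}
    (h₀ : ∀ i ∈ t, 0 ≤ w i) (h₁ : ∑ i ∈ t, w i = 1) (hf : ∀ i ∈ t, 0 ≤ f i)
    (hg : ∀ i ∈ t, 0 ≤ g i) (hM : ∀ i ∈ t, f i + g i ≤ M) :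
    ∑ i ∈ t, w i * f i ^ 2 + ∑ i ∈ t, w i * g i ^ 2 ≤ M ^ 2 :=
  calc ∑ i ∈ t, w i * f i ^ 2 + ∑ i ∈ t, w i * g i ^ 2 = ∑ i ∈ t, w i * (f i ^ 2 + g i ^ 2) := by
        simp only [mul_add, sum_add_distrib]
    _ ≤ ∑ i ∈ t, w i * M ^ 2 := sum_le_sum fun i hi => mul_le_mul_of_nonneg_left
        (by nlinarith [hf i hi, hg i hi, hM i hi]) (h₀ i hi)
    _ = M ^ 2 := by rw [← sum_mul, h₁, one_mul]

theorem add_sqrt_add_mul_sub_sq_le {a s C β M : ℝ} (hβ : 0 ≤ β) (hC : 0 ≤ C) (has : a ^ 2 ≤ s)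
    (hM : 0 ≤ M) (hsC : s + C ≤ M ^ 2) :
    a + √(C + β * (s - a ^ 2)) ≤ √(2 * (1 + β)) * M := by
  have hx : 0 ≤ C + β * (s - a ^ 2) := add_nonneg hC (mul_nonneg hβ (sub_nonneg.2 has))
  rw [← Real.sqrt_sq hM, ← Real.sqrt_mul (by positivity)]
  refine (le_abs_self _).trans (Real.abs_le_sqrt ?_)
  calc (a + √(C + β * (s - a ^ 2))) ^ 2 ≤ 2 * (a ^ 2 + √(C + β * (s - a ^ 2)) ^ 2) := add_sq_le
    _ = 2 * (a ^ 2 + C + β * (s - a ^ 2)) := by rw [Real.sq_sqrt hx, add_assoc]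
    _ ≤ 2 * (1 + β) * M ^ 2 := by
      nlinarith [mul_nonneg hβ hC, mul_nonneg hβ (sq_nonneg a), mul_le_mul_of_nonneg_left hsC hβ]

theorem combination_rule_characteristic_speed_general
    (γ : ℝ) (hγ : 1 ≤ γ) (d K : ℕ) (hK : 0 < K)
    (α : Fin K → ℝ) (hα : ∀ k, 0 ≤ α k) (hαsum : ∑ k, α k = 1)
    (u : Fin K → EuclideanSpace ℝ (Fin d))
    (c : Fin K → ℝ) (hc : ∀ k, 0 ≤ c k) :
    0 ≤ (∑ k, α k * ‖u k‖ ^ 2) - ‖∑ k, α k • u k‖ ^ 2 ∧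
    ‖∑ k, α k • u k‖ +
        Real.sqrt ((∑ k, α k * c k ^ 2) +
          (γ * (γ - 1) / 2) * ((∑ k, α k * ‖u k‖ ^ 2) - ‖∑ k, α k • u k‖ ^ 2)) ≤
      Real.sqrt (2 + γ * (γ - 1)) *
        (Finset.univ.sup' (Finset.univ_nonempty_iff.mpr ⟨⟨0, hK⟩⟩)
          fun k => ‖u k‖ + c k) := by
  have hβ : 0 ≤ γ * (γ - 1) / 2 := by nlinarith
  have hJensen := sq_norm_sum_smul_le (t := univ) (fun k _ => hα k) hαsum u
  refine ⟨sub_nonneg.2 hJensen, ?_⟩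
  set M := univ.sup' (univ_nonempty_iff.mpr ⟨⟨0, hK⟩⟩) fun k => ‖u k‖ + c k
  have hM : ∀ k ∈ univ, ‖u k‖ + c k ≤ M := fun k hk => le_sup' (fun k => ‖u k‖ + c k) hk
  have hM₀ : 0 ≤ M := (add_nonneg (norm_nonneg _) (hc _)).trans (hM ⟨0, hK⟩ (mem_univ _))
  rw [show 2 + γ * (γ - 1) = 2 * (1 + γ * (γ - 1) / 2) by ring]
  exact add_sqrt_add_mul_sub_sq_le hβ (sum_nonneg fun k _ => mul_nonneg (hα k) (sq_nonneg _))
    hJensen hM₀ (sum_mul_sq_add_sum_mul_sq_le (fun k _ => hα k) hαsum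
      (fun k _ => norm_nonneg (u k)) (fun k _ => hc k) hM)

/-- combination rule for maximum characteristic speeds: for
`γ ≥ 1`, convex weights `α_k`, velocities `u_k ∈ ℝ^d`, and sound speeds
`c_k ≥ 0`, with `u = Σ α_k u_k`, one has `Σ α_k |u_k|² − |u|² ≥ 0`, and for
`c = √(Σ α_k c_k² + (γ(γ−1)/2)(Σ α_k |u_k|² − |u|²))` the combined maximum
characteristic speed satisfies
`|u| + c ≤ √(2 + γ(γ−1)) · max_k (|u_k| + c_k)`. -/
theorem combination_rule_characteristic_speed
    (γ : ℝ) (hγ : 1 ≤ γ) (d K : ℕ) (hd : 1 ≤ d) (hK : 0 < K)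
    (α : Fin K → ℝ) (hα : ∀ k, 0 ≤ α k) (hαsum : ∑ k, α k = 1)
    (u : Fin K → EuclideanSpace ℝ (Fin d))
    (c : Fin K → ℝ) (hc : ∀ k, 0 ≤ c k) :
    0 ≤ (∑ k, α k * ‖u k‖ ^ 2) - ‖∑ k, α k • u k‖ ^ 2 ∧
    ‖∑ k, α k • u k‖ +
        Real.sqrt ((∑ k, α k * c k ^ 2) +
          (γ * (γ - 1) / 2) * ((∑ k, α k * ‖u k‖ ^ 2) - ‖∑ k, α k • u k‖ ^ 2)) ≤
      Real.sqrt (2 + γ * (γ - 1)) *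
        (Finset.univ.sup' (Finset.univ_nonempty_iff.mpr ⟨⟨0, hK⟩⟩)
          fun k => ‖u k‖ + c k) :=
  combination_rule_characteristic_speed_general γ hγ d K hK α hα hαsum u c hc
end

section
/- Let (a_x)_{x∈D} be a finite nonempty family of real numbers and let ā > 0. Define τ = min{0, min_{x∈D} a_x} and ε = τ/(τ − ā). Then 0 ≤ ε < 1, and for every x ∈ D, (1 − ε) a_x + ε ā ≥ 0. -/
/-!
With `ε = τ / (τ - ā)` one has `1 - ε = ā / (ā - τ)` and `ε = -τ / (ā - τ)`, so the convex
combination `(1 - ε) t + ε ā` equals `ā (t - τ) / (ā - τ)`. This is nonnegative exactly when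
`t ≥ τ`, which holds for every `a_x` because `τ` is at most their minimum.
-/

section LimiterCoeff

variable {τ abar : ℝ}

lemma limiter_coeff_nonneg (hτ : τ ≤ 0) (habar : 0 < abar) : 0 ≤ τ / (τ - abar) :=
  div_nonneg_of_nonpos hτ (by linarith)

lemma limiter_coeff_lt_one (habar : 0 < abar) (hτ : τ < abar) : τ / (τ - abar) < 1 := by
  rw [div_lt_one_of_neg (by linarith)]
  linarith

lemma limiter_combination_eq (h : τ ≠ abar) (t : ℝ) :
    (1 - τ / (τ - abar)) * t + τ / (τ - abar) * abar = abar * (t - τ) / (abar - τ) := by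
  have h₁ : τ - abar ≠ 0 := sub_ne_zero.mpr h
  have h₂ : abar - τ ≠ 0 := sub_ne_zero.mpr h.symm
  field_simp
  ring

lemma limiter_combination_nonneg (habar : 0 < abar) (hτ : τ < abar) {t : ℝ} (ht : τ ≤ t) :
    0 ≤ (1 - τ / (τ - abar)) * t + τ / (τ - abar) * abar := by
  rw [limiter_combination_eq hτ.ne t]
  exact div_nonneg (mul_nonneg habar.le (sub_nonneg.mpr ht)) (sub_nonneg.mpr hτ.le)

end LimiterCoeff

/-- linear-scaling limiter coefficient: for a finite nonempty
family `(a_x)_{x∈D}` of reals and `ā > 0`, with `τ = min{0, min_x a_x}` and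
`ε = τ/(τ − ā)`, one has `0 ≤ ε < 1` and `(1 − ε) a_x + ε ā ≥ 0` for all `x`. -/
theorem limiter_coefficient_property
    {D : Type*} [Fintype D] [Nonempty D]
    (a : D → ℝ) (abar : ℝ) (habar : 0 < abar)
    (τ ε : ℝ)
    (hτ : τ = min 0 (Finset.univ.inf' Finset.univ_nonempty a))
    (hε : ε = τ / (τ - abar)) :
    0 ≤ ε ∧ ε < 1 ∧ ∀ x : D, 0 ≤ (1 - ε) * a x + ε * abar := by
  have hτ_nonpos : τ ≤ 0 := hτ ▸ min_le_left _ _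
  have hτ_lt : τ < abar := hτ_nonpos.trans_lt habar
  have hτ_le (x : D) : τ ≤ a x :=
    hτ ▸ (min_le_right _ _).trans (Finset.inf'_le _ (Finset.mem_univ x))
  subst hε
  exact ⟨limiter_coeff_nonneg hτ_nonpos habar, limiter_coeff_lt_one habar hτ_lt,
    fun x => limiter_combination_nonneg habar hτ_lt (hτ_le x)⟩
end
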